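/- For every vector field K in the anti-invariant distribution D⊥ of a semi-invariant submanifold M, one has h(K,U) = -QK, h(K,V) = -QJK, ∇_K U = σ(K)V, and ∇_K V = -σ(K)U. -/

import Mathlib

/-!
Algebraic model of a normal complex contact metric manifold `M̄` together with a
submanifold `M` tangent to the vertical vector fields `U` and `V`.

`F` plays the role of the commutative ring of smooth functions on `M̄` and `X`
the `F`-module of smooth vector fields on `M̄`.
-/

/-- A normal complex contact metric manifold `M̄` (of real dimension `4m+2`),
modeled algebraically: `g` is the Hermitian metric, `J` the complex structure,
`G`, `H = GJ` the structure tensors, `U`, `V = -JU` the vertical vector fields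
with dual 1-forms `u`, `v`, `σ K = g (∇̄_K U) V`, `nabla` the Levi-Civita
connection `∇̄` of `g`, `act` the derivative of functions along vector fields,
and `lie` the Lie bracket.  Korkmaz normality is recorded through the formulas
`∇̄_K U = -GK + σ(K)V` and `∇̄_K V = -HK - σ(K)U`. -/
structure NCCMM (F : Type*) (X : Type*) [CommRing F] [AddCommGroup X] [Module F X] where
  g : X →ₗ[F] X →ₗ[F] F
  J : X →ₗ[F] X
  G : X →ₗ[F] X
  H : X →ₗ[F] X
  U : X
  V : X
  u : X →ₗ[F] F
  v : X →ₗ[F] F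
  σ : X →ₗ[F] F
  nabla : X → X → X
  act : X → F → F
  lie : X → X → X
  g_symm : ∀ K L, g K L = g L K
  g_hermitian : ∀ K L, g (J K) (J L) = g K L
  H_eq : ∀ K, H K = G (J K)
  V_eq : V = - J U
  J_sq : ∀ K, J (J K) = - K
  G_sq : ∀ K, G (G K) = - K + u K • U + v K • V
  H_sq : ∀ K, H (H K) = - K + u K • U + v K • V
  GJ_anti : ∀ K, G (J K) = - J (G K)
  G_U : G U = 0
  g_G_skew : ∀ K L, g (G K) L = - g K (G L)
  u_eq : ∀ K, u K = g K U
  v_eq : ∀ K, v K = g K V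
  nabla_add₁ : ∀ K K' L, nabla (K + K') L = nabla K L + nabla K' L
  nabla_add₂ : ∀ K L L', nabla K (L + L') = nabla K L + nabla K L'
  nabla_smul₁ : ∀ (a : F) (K L : X), nabla (a • K) L = a • nabla K L
  metric_compat : ∀ K L Z, act K (g L Z) = g (nabla K L) Z + g L (nabla K Z)
  torsion_free : ∀ K L, nabla K L - nabla L K = lie K L
  σ_eq : ∀ K, σ K = g (nabla K U) V
  nabla_U : ∀ K, nabla K U = - G K + σ K • V
  nabla_V : ∀ K, nabla K V = - H K - σ K • U

/-- A submanifold `M` of `M̄` tangent to `U` and `V`, described by the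
orthogonal projections `tp` (tangential part) and `np` (normal part) of the
ambient vector fields; vector fields tangent to `M` are those with `tp K = K`
and vector fields normal to `M` are those with `np N = N`. -/
structure SubmanifoldData (F : Type*) (X : Type*) [CommRing F] [AddCommGroup X]
    [Module F X] (A : NCCMM F X) where
  tp : X →ₗ[F] X
  np : X →ₗ[F] X
  tp_add_np : ∀ K, tp K + np K = K
  tp_tp : ∀ K, tp (tp K) = tp K
  np_np : ∀ K, np (np K) = np K
  np_tp : ∀ K, np (tp K) = 0
  tp_np : ∀ K, tp (np K) = 0
  g_tp_np : ∀ K L, A.g (tp K) (np L) = 0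
  U_tang : tp A.U = A.U
  V_tang : tp A.V = A.V
  lie_tang : ∀ K L, tp K = K → tp L = L → tp (A.lie K L) = A.lie K L

namespace SubmanifoldData

variable {F X : Type*} [CommRing F] [AddCommGroup X] [Module F X]
variable {A : NCCMM F X} (S : SubmanifoldData F X A)

/-- The induced connection `∇` on `M` (Gauss formula `∇̄_K L = ∇_K L + h(K,L)`). -/
def conn (K L : X) : X := S.tp (A.nabla K L)

/-- The second fundamental form `h` of `M`. -/
def sff (K L : X) : X := S.np (A.nabla K L)

/-- The shape operator `A_N` (Weingarten formula `∇̄_K N = -A_N K + ∇⊥_K N`). -/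
def shape (N K : X) : X := - S.tp (A.nabla K N)

/-- The normal connection `∇⊥`. -/
def nconn (K N : X) : X := S.np (A.nabla K N)

/-- `P K`: the tangential part of `G K`, so that `G K = P K + Q K`. -/
def P (K : X) : X := S.tp (A.G K)

/-- `Q K`: the normal part of `G K`, so that `G K = P K + Q K`. -/
def Q (K : X) : X := S.np (A.G K)

/-- `B N`: the tangential part of `G N` for normal `N`, so `G N = B N + C N`. -/
def B (N : X) : X := S.tp (A.G N)

/-- `C N`: the normal part of `G N` for normal `N`, so `G N = B N + C N`. -/
def C (N : X) : X := S.np (A.G N)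

/-- `K` belongs to `sp{U,V}⊥ ⊂ TM`: it is tangent to `M` and orthogonal to `U`, `V`. -/
def Hor (K : X) : Prop := S.tp K = K ∧ A.g K A.U = 0 ∧ A.g K A.V = 0

/-- The (invariant) distribution `D = {K ∈ sp{U,V}⊥ : Q K = 0}`. -/
def Dinv (K : X) : Prop := S.Hor K ∧ S.Q K = 0

/-- The (anti-invariant) distribution `D⊥ = {K ∈ sp{U,V}⊥ : P K = 0}`. -/
def Danti (K : X) : Prop := S.Hor K ∧ S.P K = 0

/-- `M` is a semi-invariant submanifold: `TM = D ⊕ D⊥ ⊕ sp{U,V}`, the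
distribution `D` is invariant under `G` and `H`, and `G`, `H` map `D⊥`
into the normal bundle `TM⊥`. -/
def SemiInvariant : Prop :=
  (∀ K, S.tp K = K → ∃ (K₁ K₂ : X) (a b : F), S.Dinv K₁ ∧ S.Danti K₂ ∧
      K = K₁ + K₂ + a • A.U + b • A.V) ∧
  ((A.G : X → X) '' {K | S.Dinv K} = {K | S.Dinv K}) ∧
  ((A.H : X → X) '' {K | S.Dinv K} = {K | S.Dinv K}) ∧
  (∀ K, S.Danti K → S.np (A.G K) = A.G K ∧ S.np (A.H K) = A.H K)

/-- `M` is totally umbilical: `h(K,L) = g(K,L) μ` for all tangent `K`, `L`,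
where `μ` is the mean curvature (normal) vector field. -/
def TotallyUmbilical : Prop :=
  ∃ μ : X, S.np μ = μ ∧
    ∀ K L : X, S.tp K = K → S.tp L = L → S.sff K L = A.g K L • μ

theorem np_eq_zero_of_tp_eq {K : X} (hK : S.tp K = K) : S.np K = 0 := by
  simpa [hK] using S.tp_add_np K

theorem tp_eq_zero_of_np_eq {N : X} (hN : S.np N = N) : S.tp N = 0 := by
  rw [← hN, S.tp_np]

theorem sff_U (K : X) : S.sff K A.U = - S.Q K := by
  simp [sff, Q, A.nabla_U, S.np_eq_zero_of_tp_eq S.V_tang]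

theorem sff_V (K : X) : S.sff K A.V = - S.Q (A.J K) := by
  simp [sff, Q, A.nabla_V, A.H_eq, S.np_eq_zero_of_tp_eq S.U_tang]

theorem conn_U (K : X) : S.conn K A.U = - S.P K + A.σ K • A.V := by
  simp [conn, P, A.nabla_U, S.V_tang]

theorem conn_V (K : X) : S.conn K A.V = - S.tp (A.H K) - A.σ K • A.U := by
  simp [conn, A.nabla_V, S.U_tang]

theorem tp_H_eq_zero_of_Danti (hSI : S.SemiInvariant) {K : X} (hK : S.Danti K) :
    S.tp (A.H K) = 0 :=
  S.tp_eq_zero_of_np_eq (hSI.2.2.2 K hK).2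

end SubmanifoldData


section

variable {F X : Type*} [CommRing F] [AddCommGroup X] [Module F X]

/-- for every `K` in the anti-invariant distribution `D⊥`:
`h(K,U) = -QK`, `h(K,V) = -QJK`, `∇_K U = σ(K)V`, `∇_K V = -σ(K)U`. -/
theorem statement7 (A : NCCMM F X) (S : SubmanifoldData F X A)
    (hSI : S.SemiInvariant) (K : X) (hK : S.Danti K) :
    S.sff K A.U = - S.Q K ∧ S.sff K A.V = - S.Q (A.J K) ∧
    S.conn K A.U = A.σ K • A.V ∧ S.conn K A.V = - A.σ K • A.U := by
  refine ⟨S.sff_U K, S.sff_V K, ?_, ?_⟩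
  · rw [S.conn_U, hK.2, neg_zero, zero_add]
  · rw [S.conn_V, S.tp_H_eq_zero_of_Danti hSI hK, neg_zero, zero_sub, neg_smul]

end
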